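/- Let C, Λ, H be real numbers with Λ ≠ 0 and 0 < H < 1, and define g(x,y) = H(x² + y²) − (H+1)xy + 2CHΛ(y−x)/(C²+1) + Λ²(H−1)/(C²+1). Then the conic {g = 0} does not intersect the lines x = Hy and y = Hx; that is, for every real y one has g(Hy, y) ≠ 0, and for every real x one has g(x, Hx) ≠ 0. -/
import Mathlib

/-- The defining polynomial of the conic Γ₁. -/
noncomputable def gConic (C H Λ x y : ℝ) : ℝ :=
  H * (x ^ 2 + y ^ 2) - (H + 1) * x * y + 2 * C * H * Λ * (y - x) / (C ^ 2 + 1) +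
    Λ ^ 2 * (H - 1) / (C ^ 2 + 1)

/-- The conic Γ₁ avoids the focal lines x = Hy and y = Hx. -/
theorem conic_avoids_focal_lines (C Λ H : ℝ) (hΛ : Λ ≠ 0) (hH0 : 0 < H) (hH1 : H < 1) :
    (∀ y : ℝ, gConic C H Λ (H * y) y ≠ 0) ∧
    (∀ x : ℝ, gConic C H Λ x (H * x) ≠ 0) := by
  have hC : (0:ℝ) < C ^ 2 + 1 := by positivity
  have hC' : (C:ℝ) ^ 2 + 1 ≠ 0 := ne_of_gt hC
  constructor
  · intro y h
    rw [gConic] at h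
    have h2 : H * ((H*y) ^ 2 + y ^ 2) * (C^2+1) - (H + 1) * (H*y) * y * (C^2+1) +
        2 * C * H * Λ * (y - H*y) + Λ ^ 2 * (H - 1) = 0 := by
      field_simp at h; linarith
    nlinarith [sq_nonneg (H*y*(C^2+1) - C*Λ), sq_nonneg Λ, sq_nonneg (H*y), hΛ, pow_pos (abs_pos.mpr hΛ) 2, sq_abs Λ, mul_pos hC hC]
  · intro x h
    rw [gConic] at h
    have h2 : H * (x ^ 2 + (H*x) ^ 2) * (C^2+1) - (H + 1) * x * (H*x) * (C^2+1) +
        2 * C * H * Λ * (H*x - x) + Λ ^ 2 * (H - 1) = 0 := by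
      field_simp at h; linarith
    nlinarith [sq_nonneg (H*x*(C^2+1) + C*Λ), pow_pos (abs_pos.mpr hΛ) 2, sq_abs Λ, mul_pos hC hC]
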